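/- For every fixed integer u ≥ 0, as k → ∞ one has κ_k^{-1} Σ_{i=0}^{k-u} 2^{-i} (i - η_k)(i + u - η_k)/(2 - 2^{-k}) → 1. -/
import Mathlib


open Finset Filter

noncomputable def eta (k : ℕ) : ℝ :=
  (∑ j ∈ Finset.range (k + 1), (j : ℝ) * (2 : ℝ) ^ (-(j : ℝ))) / (2 - (2 : ℝ) ^ (-(k : ℝ)))

noncomputable def kappa (k : ℕ) : ℝ :=
  (∑ j ∈ Finset.range (k + 1), ((j : ℝ) - eta k) ^ 2 * (2 : ℝ) ^ (-(j : ℝ))) /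
    (2 - (2 : ℝ) ^ (-(k : ℝ)))

lemma two_rpow_neg (j : ℕ) : (2 : ℝ) ^ (-(j : ℝ)) = (1/2 : ℝ) ^ j := by
  rw [Real.rpow_neg (by norm_num), Real.rpow_natCast]
  simp [one_div, inv_pow]

lemma habs : |(1/2 : ℝ)| < 1 := by rw [abs_lt]; norm_num

lemma sumG (k : ℕ) : ∑ j ∈ Finset.range (k + 1), (2 : ℝ) ^ (-(j : ℝ))
    = 2 - (2 : ℝ) ^ (-(k : ℝ)) := by
  induction k with
  | zero => norm_num
  | succ n ih =>
    rw [Finset.sum_range_succ, ih]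
    simp only [two_rpow_neg]
    ring

lemma sumA (k : ℕ) : ∑ j ∈ Finset.range (k + 1), (j : ℝ) * (2 : ℝ) ^ (-(j : ℝ))
    = 2 - ((k : ℝ) + 2) * (2 : ℝ) ^ (-(k : ℝ)) := by
  induction k with
  | zero => norm_num
  | succ n ih =>
    rw [Finset.sum_range_succ, ih]
    simp only [two_rpow_neg]
    push_cast
    ring

lemma sumB (k : ℕ) : ∑ j ∈ Finset.range (k + 1), (j : ℝ) ^ 2 * (2 : ℝ) ^ (-(j : ℝ))
    = 6 - ((k : ℝ) ^ 2 + 4 * k + 6) * (2 : ℝ) ^ (-(k : ℝ)) := by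
  induction k with
  | zero => norm_num
  | succ n ih =>
    rw [Finset.sum_range_succ, ih]
    simp only [two_rpow_neg]
    push_cast
    ring

lemma base0 : Tendsto (fun k : ℕ => (2 : ℝ) ^ (-(k : ℝ))) atTop (nhds 0) := by
  simp only [two_rpow_neg]
  exact tendsto_pow_atTop_nhds_zero_of_lt_one (by norm_num) (by norm_num)

lemma base1 : Tendsto (fun k : ℕ => (k : ℝ) * (2 : ℝ) ^ (-(k : ℝ))) atTop (nhds 0) := by
  simp only [two_rpow_neg]
  have := tendsto_pow_const_mul_const_pow_of_abs_lt_one 1 (r := (1/2 : ℝ)) habs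
  simpa using this

lemma base2 : Tendsto (fun k : ℕ => (k : ℝ) ^ 2 * (2 : ℝ) ^ (-(k : ℝ))) atTop (nhds 0) := by
  simp only [two_rpow_neg]
  exact tendsto_pow_const_mul_const_pow_of_abs_lt_one 2 (r := (1/2 : ℝ)) habs

lemma tendstoG : Tendsto (fun k : ℕ => 2 - (2 : ℝ) ^ (-(k : ℝ))) atTop (nhds 2) := by
  simpa using (tendsto_const_nhds (x := (2:ℝ)) (f := atTop)).sub base0

lemma tendstoGsum :
    Tendsto (fun k : ℕ => ∑ j ∈ Finset.range (k + 1), (2 : ℝ) ^ (-(j : ℝ))) atTop (nhds 2) := by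
  simp only [sumG]; exact tendstoG

lemma tendstoA : Tendsto (fun k : ℕ => ∑ j ∈ Finset.range (k + 1), (j : ℝ) * (2 : ℝ) ^ (-(j : ℝ)))
    atTop (nhds 2) := by
  simp only [sumA]
  have h0 : Tendsto (fun k : ℕ => ((k : ℝ) + 2) * (2 : ℝ) ^ (-(k : ℝ))) atTop (nhds 0) := by
    have heq : (fun k : ℕ => ((k : ℝ) + 2) * (2 : ℝ) ^ (-(k : ℝ)))
        = fun k : ℕ => (k : ℝ) * (2 : ℝ) ^ (-(k : ℝ)) + 2 * (2 : ℝ) ^ (-(k : ℝ)) := by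
      funext k; ring
    rw [heq]
    simpa using base1.add (base0.const_mul 2)
  simpa using (tendsto_const_nhds (x := (2:ℝ)) (f := atTop)).sub h0

lemma tendstoB : Tendsto (fun k : ℕ => ∑ j ∈ Finset.range (k + 1), (j : ℝ) ^ 2 * (2 : ℝ) ^ (-(j : ℝ)))
    atTop (nhds 6) := by
  simp only [sumB]
  have h0 : Tendsto (fun k : ℕ => ((k : ℝ) ^ 2 + 4 * k + 6) * (2 : ℝ) ^ (-(k : ℝ))) atTop (nhds 0) := by
    have heq : (fun k : ℕ => ((k : ℝ) ^ 2 + 4 * k + 6) * (2 : ℝ) ^ (-(k : ℝ)))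
        = fun k : ℕ => (k : ℝ) ^ 2 * (2 : ℝ) ^ (-(k : ℝ)) + 4 * ((k : ℝ) * (2 : ℝ) ^ (-(k : ℝ)))
            + 6 * (2 : ℝ) ^ (-(k : ℝ)) := by
      funext k; ring
    rw [heq]
    simpa using (base2.add (base1.const_mul 4)).add (base0.const_mul 6)
  simpa using (tendsto_const_nhds (x := (6:ℝ)) (f := atTop)).sub h0

lemma tendsto_eta : Tendsto (fun k : ℕ => eta k) atTop (nhds 1) := by
  have h := tendstoA.div tendstoG (by norm_num)
  have hval : (2 : ℝ) / 2 = 1 := by norm_num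
  rw [hval] at h
  exact h

lemma kappa_eq (k : ℕ) : kappa k =
    ((∑ j ∈ Finset.range (k + 1), (j : ℝ) ^ 2 * (2 : ℝ) ^ (-(j : ℝ)))
      - 2 * eta k * (∑ j ∈ Finset.range (k + 1), (j : ℝ) * (2 : ℝ) ^ (-(j : ℝ)))
      + eta k ^ 2 * (∑ j ∈ Finset.range (k + 1), (2 : ℝ) ^ (-(j : ℝ))))
    / (2 - (2 : ℝ) ^ (-(k : ℝ))) := by
  unfold kappa
  congr 1
  rw [Finset.mul_sum, Finset.mul_sum, ← Finset.sum_sub_distrib, ← Finset.sum_add_distrib]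
  exact Finset.sum_congr rfl fun j _ => by ring

lemma tendsto_kappa : Tendsto (fun k : ℕ => kappa k) atTop (nhds 2) := by
  simp only [kappa_eq]
  have hnum : Tendsto (fun k : ℕ =>
      (∑ j ∈ Finset.range (k + 1), (j : ℝ) ^ 2 * (2 : ℝ) ^ (-(j : ℝ)))
      - 2 * eta k * (∑ j ∈ Finset.range (k + 1), (j : ℝ) * (2 : ℝ) ^ (-(j : ℝ)))
      + eta k ^ 2 * (∑ j ∈ Finset.range (k + 1), (2 : ℝ) ^ (-(j : ℝ))))
      atTop (nhds (6 - 2 * 1 * 2 + 1 ^ 2 * 2)) :=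
    (tendstoB.sub (((tendsto_eta.const_mul 2).mul tendstoA))).add
      ((tendsto_eta.pow 2).mul tendstoGsum)
  have h := hnum.div tendstoG (by norm_num)
  have hval : ((6 : ℝ) - 2 * 1 * 2 + 1 ^ 2 * 2) / 2 = 2 := by norm_num
  rw [hval] at h
  exact h

theorem crossterm_sum_tendsto_one (u : ℕ) :
    Tendsto (fun k : ℕ =>
        (1 / kappa k) * ∑ i ∈ Finset.range (k - u + 1),
          (2 : ℝ) ^ (-(i : ℝ)) / (2 - (2 : ℝ) ^ (-(k : ℝ))) *
            ((i : ℝ) - eta k) * ((i : ℝ) + (u : ℝ) - eta k))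
      atTop (nhds 1) := by
  have key : ∀ k : ℕ,
      (∑ i ∈ Finset.range (k - u + 1),
        (2 : ℝ) ^ (-(i : ℝ)) / (2 - (2 : ℝ) ^ (-(k : ℝ))) *
          ((i : ℝ) - eta k) * ((i : ℝ) + (u : ℝ) - eta k))
      = ((∑ i ∈ Finset.range (k - u + 1), (i : ℝ) ^ 2 * (2 : ℝ) ^ (-(i : ℝ)))
        + ((u : ℝ) - 2 * eta k) * (∑ i ∈ Finset.range (k - u + 1), (i : ℝ) * (2 : ℝ) ^ (-(i : ℝ)))
        + (eta k ^ 2 - (u : ℝ) * eta k) * (∑ i ∈ Finset.range (k - u + 1), (2 : ℝ) ^ (-(i : ℝ))))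
        / (2 - (2 : ℝ) ^ (-(k : ℝ))) := by
    intro k
    rw [Finset.mul_sum, Finset.mul_sum, ← Finset.sum_add_distrib, ← Finset.sum_add_distrib,
      Finset.sum_div]
    exact Finset.sum_congr rfl fun i _ => by ring
  simp only [key]
  have hsub : Tendsto (fun k : ℕ => k - u) atTop atTop := tendsto_sub_atTop_nat u
  have hB := tendstoB.comp hsub
  have hA := tendstoA.comp hsub
  have hG' := tendstoGsum.comp hsub
  have hnum : Tendsto (fun k : ℕ =>
      (∑ i ∈ Finset.range (k - u + 1), (i : ℝ) ^ 2 * (2 : ℝ) ^ (-(i : ℝ)))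
      + ((u : ℝ) - 2 * eta k) * (∑ i ∈ Finset.range (k - u + 1), (i : ℝ) * (2 : ℝ) ^ (-(i : ℝ)))
      + (eta k ^ 2 - (u : ℝ) * eta k) * (∑ i ∈ Finset.range (k - u + 1), (2 : ℝ) ^ (-(i : ℝ))))
      atTop (nhds (6 + ((u : ℝ) - 2 * 1) * 2 + (1 ^ 2 - (u : ℝ) * 1) * 2)) := by
    refine (hB.add ?_).add ?_
    · exact (tendsto_const_nhds.sub (tendsto_eta.const_mul 2)).mul hA
    · exact ((tendsto_eta.pow 2).sub (tendsto_eta.const_mul (u : ℝ))).mul hG'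
  have hfrac := hnum.div tendstoG (by norm_num)
  have hinv : Tendsto (fun k : ℕ => 1 / kappa k) atTop (nhds (1 / 2)) :=
    tendsto_const_nhds.div tendsto_kappa (by norm_num)
  have h := hinv.mul hfrac
  have hval : (1/2 : ℝ) * ((6 + ((u : ℝ) - 2 * 1) * 2 + (1 ^ 2 - (u : ℝ) * 1) * 2) / 2) = 1 := by
    ring
  rw [hval] at h
  exact h
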